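/- Let K be an algebraically closed field and let p be a Laurent polynomial in n variables over K such that p(t_1², …, t_n²) = 2·p(t_1, …, t_n) for all (t_1,…,t_n) ∈ (K^×)^n. Then p = 0. -/

import Mathlib

/-!
Distinct exponent vectors give distinct characters of the torus `(Kˣ)ⁿ` (an infinite field has
only finitely many `d`-th roots of unity), so by Dedekind's independence of characters a Laurent
polynomial is determined by its values. Substituting `tⱼ ↦ tⱼ²` doubles the exponents, so the
functional equation becomes the coefficient identity `p k = 2 p (2k)`. A nonzero coefficient
would then propagate from `k` to `2k`; taking `k` of maximal `ℓ¹`-norm in the support forces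
`k = 0`, where the identity reads `p 0 = 2 p 0`, i.e. `p 0 = 0`.
-/

/-- Evaluation of a (multivariate) Laurent polynomial `F` at a point `t` of the torus. -/
noncomputable def lEval {K : Type*} [Field K] {r : ℕ}
    (F : (Fin r → ℤ) →₀ K) (t : Fin r → Kˣ) : K :=
  F.sum fun m c => c * ∏ j, ((t j ^ m j : Kˣ) : K)

theorem Units.exists_zpow_ne_one {K : Type*} [Field K] [Infinite K] {d : ℤ} (hd : d ≠ 0) :
    ∃ u : Kˣ, u ^ d ≠ 1 := by
  have : Infinite Kˣ := by
    rw [unitsEquivNeZero.infinite_iff]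
    exact (Set.finite_singleton (0 : K)).infinite_compl.to_subtype
  by_contra! h
  have : NeZero d.natAbs := ⟨Int.natAbs_ne_zero.2 hd⟩
  have : Finite Kˣ := Finite.of_injective
    (fun u => (⟨u, (mem_rootsOfUnity _ u).2 (pow_natAbs_eq_one.2 (h u))⟩ :
      rootsOfUnity d.natAbs K))
    fun u v huv => congrArg Subtype.val huv
  exact not_finite Kˣ

section TorusCharacter

variable {ι K : Type*} [Fintype ι] [Field K]

noncomputable def torusChar (m : ι → ℤ) : (ι → Kˣ) →* K where
  toFun t := ∏ j, ((t j ^ m j : Kˣ) : K)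
  map_one' := by simp
  map_mul' s t := by simp only [Pi.mul_apply, mul_zpow, Units.val_mul, Finset.prod_mul_distrib]

theorem torusChar_mulSingle [DecidableEq ι] (m : ι → ℤ) (i : ι) (u : Kˣ) :
    torusChar m (Pi.mulSingle i u) = ((u ^ m i : Kˣ) : K) := by
  simp [torusChar, Pi.mulSingle_apply, apply_ite]

theorem torusChar_injective [Infinite K] : Function.Injective (torusChar (ι := ι) (K := K)) := by
  classical
  intro m m' hm
  by_contra hne
  obtain ⟨i, hi⟩ := Function.ne_iff.1 hne
  obtain ⟨u, hu⟩ := Units.exists_zpow_ne_one (K := K) (sub_ne_zero.2 hi)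
  have := DFunLike.congr_fun hm (Pi.mulSingle i u)
  rw [torusChar_mulSingle, torusChar_mulSingle, Units.val_inj] at this
  exact hu (by rw [zpow_sub, this, mul_inv_cancel])

end TorusCharacter

section LaurentEvaluation

variable {K : Type*} [Field K] {r : ℕ}

theorem lEval_eq_linearCombination (F : (Fin r → ℤ) →₀ K) :
    lEval F = Finsupp.linearCombination K (fun m => ⇑(torusChar (K := K) m)) F := by
  ext t
  simp [lEval, Finsupp.linearCombination_apply, Finsupp.sum, torusChar]

theorem lEval_injective [Infinite K] :
    Function.Injective (lEval : ((Fin r → ℤ) →₀ K) → (Fin r → Kˣ) → K) := by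
  intro F G h
  simp only [lEval_eq_linearCombination] at h
  exact ((linearIndependent_monoidHom _ K).comp _ torusChar_injective) h

theorem lEval_smul (c : K) (F : (Fin r → ℤ) →₀ K) (t : Fin r → Kˣ) :
    lEval (c • F) t = c * lEval F t := by
  simp [lEval_eq_linearCombination]

theorem lEval_mapDomain_nsmul (k : ℕ) (F : (Fin r → ℤ) →₀ K) (t : Fin r → Kˣ) :
    lEval (F.mapDomain (k • ·)) t = lEval F (fun j => t j ^ k) := by
  rw [lEval, Finsupp.sum_mapDomain_index (fun _ => zero_mul _) (fun _ _ _ => add_mul _ _ _)]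
  simp only [Pi.smul_apply, nsmul_eq_mul, zpow_mul, zpow_natCast]
  rfl

end LaurentEvaluation

theorem Finsupp.eq_zero_of_apply_eq_two_mul_apply_two_nsmul {ι R : Type*} [Fintype ι]
    [NonAssocRing R] (f : (ι → ℤ) →₀ R) (hf : ∀ k, f k = 2 * f (2 • k)) : f = 0 := by
  by_contra hne
  obtain ⟨k, hk, hmax⟩ := f.support.exists_max_image (fun k => ∑ i, |k i|)
    (Finsupp.support_nonempty_iff.2 hne)
  have h2k : 2 • k ∈ f.support := by
    rw [Finsupp.mem_support_iff] at hk ⊢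
    exact fun h => hk (by rw [hf, h, mul_zero])
  have hk0 : k = 0 := by
    have hle := hmax _ h2k
    simp only [Pi.smul_apply, nsmul_eq_mul, abs_mul, Nat.cast_ofNat, abs_two,
      ← Finset.mul_sum] at hle
    have hsum : ∑ i, |k i| = 0 := le_antisymm (by linarith) (by positivity)
    ext i
    exact abs_eq_zero.1 <|
      congrFun ((Fintype.sum_eq_zero_iff_of_nonneg fun i => abs_nonneg _).1 hsum) i
  subst hk0
  have hf0 := hf 0
  rw [smul_zero, two_mul, left_eq_add] at hf0
  exact Finsupp.mem_support_iff.1 hk hf0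

/-- A Laurent polynomial `p` in `n` variables over an algebraically closed field
satisfying `p(t₁², …, t_n²) = 2 p(t₁, …, t_n)` on the whole torus is zero. -/
theorem laurent_poly_doubling_eq_zero
    {K : Type*} [Field K] [IsAlgClosed K] (n : ℕ) (p : (Fin n → ℤ) →₀ K)
    (h : ∀ t : Fin n → Kˣ, lEval p (fun j => (t j) ^ 2) = 2 * lEval p t) :
    p = 0 := by
  have hdouble : p.mapDomain (2 • ·) = (2 : K) • p :=
    lEval_injective <| funext fun t => by rw [lEval_mapDomain_nsmul, h, lEval_smul]
  refine Finsupp.eq_zero_of_apply_eq_two_mul_apply_two_nsmul p fun k => ?_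
  have hk := DFunLike.congr_fun hdouble (2 • k)
  rwa [Finsupp.mapDomain_apply (nsmul_right_injective two_ne_zero), Finsupp.smul_apply,
    smul_eq_mul] at hk
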